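/- arXiv:1105.1321 — 4 statements merged into one kernel-verified Lean document; each statement's English description precedes it below -/
import Mathlib

section
/- The order of the subgroup H = {(ξ,η) ∈ μ_d × μ_e | ξ^a η^r = 1 and ξ^b η^s = 1} of μ_d × μ_e, where gcd(d,a,b) = gcd(e,r,s) = 1, equals gcd(d, e, a·s − b·r). -/
/-!
For `x, y` in a commutative group, the pairs `(k, l)` with `x ^ k * y ^ l = 1` form a subgroup of
`ℤ²`. For `(ξ, η) ∈ H` it contains `(d, 0), (0, e), (a, r), (b, s)`, hence also
`(a e, 0), (b e, 0), (a s - b r, 0)`; a Bezout identity `d u + a v + b w = 1` then gives `(e, 0)`,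
so `ξ ^ g = 1` for `g = gcd(d, e, a s - b r)`, and symmetrically `η ^ g = 1`. With a Bezout identity
`g u + a v + b w = 1`, the relation `(1, r v + s w) = u (g, 0) + v (a, r) + w (b, s)` forces
`ξ = η ^ (-(r v + s w))`, and conversely every `η ∈ μ_g` extends to `(η ^ (-(r v + s w)), η) ∈ H`
because `g ∣ a s - b r`. Hence `(ξ, η) ↦ η` is a bijection `H ≃ μ_g`.
-/

theorem Int.exists_mul_add_mul_add_mul_eq_one {n a b : ℤ} (h : Int.gcd (Int.gcd n a) b = 1) :
    ∃ u v w : ℤ, n * u + a * v + b * w = 1 := by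
  obtain ⟨p, q, hpq⟩ := Int.isCoprime_iff_gcd_eq_one.mpr h
  exact ⟨p * Int.gcdA n a, p * Int.gcdB n a, q,
    by linear_combination hpq - p * Int.gcd_eq_gcd_ab n a⟩

/-- The group `H`, with `M = ℂ`. -/
def pairSolutions (M : Type*) [DivInvMonoid M] (d e : ℕ) (a b r s : ℤ) : Set (M × M) :=
  {p | p.1 ^ d = 1 ∧ p.2 ^ e = 1 ∧ p.1 ^ a * p.2 ^ r = 1 ∧ p.1 ^ b * p.2 ^ s = 1}

namespace AddSubgroup

variable {L : AddSubgroup (ℤ × ℤ)}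

theorem gcd_mk_zero_mem {k l : ℤ} (hk : (k, 0) ∈ L) (hl : (l, 0) ∈ L) :
    ((Int.gcd k l : ℤ), 0) ∈ L := by
  have h : ((Int.gcd k l : ℤ), (0 : ℤ)) = Int.gcdA k l • (k, 0) + Int.gcdB k l • (l, 0) := by
    simp only [Prod.smul_mk, Int.zsmul_eq_mul, Prod.mk_add_mk, Prod.mk.injEq]
    exact ⟨by rw [Int.gcd_eq_gcd_ab]; ring, by ring⟩
  exact h ▸ add_mem (zsmul_mem hk _) (zsmul_mem hl _)

theorem gcd_det_mk_zero_mem {d e a b r s : ℤ} (hd : (d, 0) ∈ L) (he : (0, e) ∈ L)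
    (h₁ : (a, r) ∈ L) (h₂ : (b, s) ∈ L) (hdab : Int.gcd (Int.gcd d a) b = 1) :
    ((Int.gcd (Int.gcd d e) (a * s - b * r) : ℤ), 0) ∈ L := by
  have hae : (a * e, (0 : ℤ)) ∈ L := by
    have h : (a * e, (0 : ℤ)) = e • (a, r) - r • (0, e) := by
      simp only [Prod.smul_mk, Int.zsmul_eq_mul, Prod.mk_sub_mk, Prod.mk.injEq]
      constructor <;> ring
    exact h ▸ sub_mem (zsmul_mem h₁ e) (zsmul_mem he r)
  have hbe : (b * e, (0 : ℤ)) ∈ L := by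
    have h : (b * e, (0 : ℤ)) = e • (b, s) - s • (0, e) := by
      simp only [Prod.smul_mk, Int.zsmul_eq_mul, Prod.mk_sub_mk, Prod.mk.injEq]
      constructor <;> ring
    exact h ▸ sub_mem (zsmul_mem h₂ e) (zsmul_mem he s)
  have hdet : (a * s - b * r, (0 : ℤ)) ∈ L := by
    have h : (a * s - b * r, (0 : ℤ)) = s • (a, r) - r • (b, s) := by
      simp only [Prod.smul_mk, Int.zsmul_eq_mul, Prod.mk_sub_mk, Prod.mk.injEq]
      constructor <;> ring
    exact h ▸ sub_mem (zsmul_mem h₁ s) (zsmul_mem h₂ r)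
  obtain ⟨u, v, w, huvw⟩ := Int.exists_mul_add_mul_add_mul_eq_one hdab
  have hee : (e, (0 : ℤ)) ∈ L := by
    have h : (e, (0 : ℤ)) = (e * u) • (d, 0) + v • (a * e, 0) + w • (b * e, 0) := by
      simp only [Prod.smul_mk, Int.zsmul_eq_mul, Prod.mk_add_mk, Prod.mk.injEq]
      exact ⟨by linear_combination -e * huvw, by ring⟩
    exact h ▸ add_mem (add_mem (zsmul_mem hd _) (zsmul_mem hae v)) (zsmul_mem hbe w)
  exact gcd_mk_zero_mem (gcd_mk_zero_mem hd hee) hdet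

end AddSubgroup

section CommGroup

variable {G : Type*} [CommGroup G] {x y : G} {n d e : ℕ} {a b r s u v w : ℤ}

def relationLattice (x y : G) : AddSubgroup (ℤ × ℤ) where
  carrier := {v | x ^ v.1 * y ^ v.2 = 1}
  add_mem' {v w} hv hw := by
    simp only [Set.mem_ofPred_eq, Prod.fst_add, Prod.snd_add, zpow_add] at hv hw ⊢
    rw [mul_mul_mul_comm, hv, hw, one_mul]
  zero_mem' := by simp
  neg_mem' {v} hv := by
    simp only [Set.mem_ofPred_eq, Prod.fst_neg, Prod.snd_neg, zpow_neg] at hv ⊢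
    rw [← mul_inv, hv, inv_one]

theorem mem_relationLattice {v : ℤ × ℤ} : v ∈ relationLattice x y ↔ x ^ v.1 * y ^ v.2 = 1 :=
  Iff.rfl

theorem zpow_eq_one_of_natCast_dvd {k : ℤ} (hx : x ^ n = 1) (hk : (n : ℤ) ∣ k) : x ^ k = 1 := by
  obtain ⟨c, rfl⟩ := hk
  rw [zpow_mul, zpow_natCast, hx, one_zpow]

theorem fst_pow_gcd_det_eq_one {p : G × G} (hp : p ∈ pairSolutions G d e a b r s)
    (hdab : Int.gcd (Int.gcd d a) b = 1) : p.1 ^ Int.gcd (Int.gcd d e) (a * s - b * r) = 1 := by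
  obtain ⟨hx, hy, h₁, h₂⟩ := hp
  have h := AddSubgroup.gcd_det_mk_zero_mem (L := relationLattice p.1 p.2) (d := d) (e := e)
    (by simpa [mem_relationLattice]) (by simpa [mem_relationLattice]) h₁ h₂ hdab
  simpa [mem_relationLattice] using h

theorem snd_pow_gcd_det_eq_one {p : G × G} (hp : p ∈ pairSolutions G d e a b r s)
    (hers : Int.gcd (Int.gcd e r) s = 1) : p.2 ^ Int.gcd (Int.gcd d e) (a * s - b * r) = 1 := by
  obtain ⟨hx, hy, h₁, h₂⟩ := hp
  have h := fst_pow_gcd_det_eq_one (p := p.swap) (d := e) (e := d) (a := r) (b := s) (r := a)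
    (s := b) ⟨hy, hx, by rwa [mul_comm], by rwa [mul_comm]⟩ hers
  rwa [Int.gcd_comm (e : ℤ), show r * b - s * a = -(a * s - b * r) by ring, Int.gcd_neg] at h

theorem eq_zpow_of_bezout (hx : x ^ n = 1) (h₁ : x ^ a * y ^ r = 1) (h₂ : x ^ b * y ^ s = 1)
    (huvw : n * u + a * v + b * w = 1) : x = y ^ (-(r * v + s * w)) := by
  have h : (1, r * v + s * w) ∈ relationLattice x y := by
    have h : ((1 : ℤ), r * v + s * w) = u • ((n : ℤ), 0) + v • (a, r) + w • (b, s) := by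
      simp only [Prod.smul_mk, Int.zsmul_eq_mul, Prod.mk_add_mk, Prod.mk.injEq]
      exact ⟨by linear_combination -huvw, by ring⟩
    refine h ▸ add_mem (add_mem (zsmul_mem ?_ u) (zsmul_mem h₁ v)) (zsmul_mem h₂ w)
    simpa [mem_relationLattice]
  rw [zpow_neg, eq_inv_iff_mul_eq_one]
  simpa [mem_relationLattice] using h

theorem zpow_mem_pairSolutions (hy : y ^ n = 1) (hnd : (n : ℤ) ∣ d) (hne : (n : ℤ) ∣ e)
    (hdet : (n : ℤ) ∣ a * s - b * r) (huvw : n * u + a * v + b * w = 1) :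
    (y ^ (-(r * v + s * w)), y) ∈ pairSolutions G d e a b r s := by
  obtain ⟨t, ht⟩ := hdet
  refine ⟨?_, ?_, ?_, ?_⟩
  · rw [← zpow_natCast, ← zpow_mul]
    exact zpow_eq_one_of_natCast_dvd hy (hnd.mul_left _)
  · rw [← zpow_natCast]
    exact zpow_eq_one_of_natCast_dvd hy hne
  · rw [← zpow_mul, ← zpow_add]
    exact zpow_eq_one_of_natCast_dvd hy ⟨r * u - w * t, by linear_combination -r * huvw - w * ht⟩
  · rw [← zpow_mul, ← zpow_add]
    exact zpow_eq_one_of_natCast_dvd hy ⟨s * u + v * t, by linear_combination -s * huvw + v * ht⟩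

/-- The group `H`, with `M = ℂ`. -/
def pairSolutionsEquiv (hdab : Int.gcd (Int.gcd d a) b = 1) (hers : Int.gcd (Int.gcd e r) s = 1)
    (huvw : Int.gcd (Int.gcd d e) (a * s - b * r) * u + a * v + b * w = 1) :
    pairSolutions G d e a b r s ≃ {y : G // y ^ Int.gcd (Int.gcd d e) (a * s - b * r) = 1} where
  toFun p := ⟨p.1.2, snd_pow_gcd_det_eq_one p.2 hers⟩
  invFun y := ⟨(y.1 ^ (-(r * v + s * w)), y.1),
    zpow_mem_pairSolutions y.2 ((Int.gcd_dvd_left _ _).trans (Int.gcd_dvd_left _ _))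
      ((Int.gcd_dvd_left _ _).trans (Int.gcd_dvd_right _ _)) (Int.gcd_dvd_right _ _) huvw⟩
  left_inv p := Subtype.ext <| Prod.ext
    (eq_zpow_of_bezout (fst_pow_gcd_det_eq_one p.2 hdab) p.2.2.2.1 p.2.2.2.2 huvw).symm rfl
  right_inv _ := rfl

theorem Nat.card_pairSolutions (hdab : Int.gcd (Int.gcd d a) b = 1)
    (hers : Int.gcd (Int.gcd e r) s = 1) :
    Nat.card (pairSolutions G d e a b r s) =
      Nat.card {y : G // y ^ Int.gcd (Int.gcd d e) (a * s - b * r) = 1} := by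
  obtain ⟨u, v, w, huvw⟩ := Int.exists_mul_add_mul_add_mul_eq_one hdab
  obtain ⟨k, hk⟩ := (Int.gcd_dvd_left _ (a * s - b * r)).trans (Int.gcd_dvd_left (d : ℤ) e)
  exact Nat.card_congr <|
    pairSolutionsEquiv hdab hers (u := k * u) (v := v) (w := w) (by linear_combination huvw - u * hk)

end CommGroup

theorem Nat.card_pairSolutions_units {M : Type*} [DivisionMonoid M] {d e : ℕ} {a b r s : ℤ}
    (hd : d ≠ 0) (he : e ≠ 0) :
    Nat.card (pairSolutions Mˣ d e a b r s) = Nat.card (pairSolutions M d e a b r s) := by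
  have hval : ∀ p : Mˣ × Mˣ, Prod.map Units.val Units.val p ∈ pairSolutions M d e a b r s ↔
      p ∈ pairSolutions Mˣ d e a b r s := by
    simp [pairSolutions, Units.ext_iff]
  have himage : Prod.map Units.val Units.val '' pairSolutions Mˣ d e a b r s =
      pairSolutions M d e a b r s := by
    refine Set.Subset.antisymm (Set.image_subset_iff.mpr fun p hp => (hval p).mpr hp) ?_
    rintro ⟨x, y⟩ hp
    lift x to Mˣ using IsUnit.of_pow_eq_one hp.1 hd
    lift y to Mˣ using IsUnit.of_pow_eq_one hp.2.1 he
    exact ⟨(x, y), (hval (x, y)).mp hp, rfl⟩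
  rw [← himage, Nat.card_image_of_injective (Units.val_injective.prodMap Units.val_injective)]

/-- The order of the subgroup `H = {(ξ,η) ∈ μ_d × μ_e | ξ^a η^r = 1, ξ^b η^s = 1}`
equals `gcd(d, e, a·s − b·r)`, provided `gcd(d,a,b) = gcd(e,r,s) = 1`. -/
theorem order_of_H (d e : ℕ) (hd : 0 < d) (he : 0 < e) (a b r s : ℤ)
    (hdab : Int.gcd (Int.gcd (d : ℤ) a) b = 1)
    (hers : Int.gcd (Int.gcd (e : ℤ) r) s = 1) :
    Nat.card {p : ℂ × ℂ // p.1 ^ d = 1 ∧ p.2 ^ e = 1 ∧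
      p.1 ^ a * p.2 ^ r = 1 ∧ p.1 ^ b * p.2 ^ s = 1} =
    Int.gcd (Int.gcd (d : ℤ) (e : ℤ)) (a * s - b * r) := by
  have : NeZero (Int.gcd (Int.gcd (d : ℤ) (e : ℤ)) (a * s - b * r)) :=
    ⟨by simp [Int.gcd_eq_zero_iff, hd.ne']⟩
  calc _ = Nat.card (pairSolutions ℂ d e a b r s) := rfl
    _ = Nat.card (pairSolutions ℂˣ d e a b r s) := (Nat.card_pairSolutions_units hd.ne' he.ne').symm
    _ = Nat.card (rootsOfUnity (Int.gcd (Int.gcd (d : ℤ) (e : ℤ)) (a * s - b * r)) ℂ) :=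
      Nat.card_pairSolutions hdab hers
    _ = _ := Complex.card_rootsOfUnity _
end

section
/- Let d, e be positive integers and a, b, r, s integers with gcd(d,a,b) = gcd(e,r,s) = 1. The number of solutions (i,j) ∈ (ℤ/gcd(d,e))² of the system a·i + r·j ≡ 0 and b·i + s·j ≡ 0 (mod gcd(d,e)) equals gcd(d, e, a·s − b·r). -/
/-!
Since `gcd(d, a, b) = 1` and `gcd(d, e) ∣ d`, the residues of `a` and `b` generate the unit ideal
of `ℤ/gcd(d, e)`. A Bézout relation `u·a + v·b = 1` then expresses `i` through `j`, so the
solutions correspond to the `j` with `(a·s − b·r)·j = 0`. In the cyclic group `ℤ/n` the kernel of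
multiplication by `c` has `gcd(n, c)` elements.
-/

theorem ZMod.card_intCast_mul_eq_zero (n : ℕ) [NeZero n] (c : ℤ) :
    Nat.card {j : ZMod n // (c : ZMod n) * j = 0} = Int.gcd n c := by
  have hker : ∀ j : ZMod n, (c : ZMod n) * j = 0 ↔ c.natAbs • j = 0 := fun j => by
    rcases Int.natAbs_eq c with hc | hc <;> rw [hc] <;> simp [nsmul_eq_mul]
  calc Nat.card {j : ZMod n // (c : ZMod n) * j = 0}
      = Nat.card (nsmulAddMonoidHom (α := ZMod n) c.natAbs).ker :=
        Nat.card_congr (Equiv.subtypeEquivRight hker)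
    _ = Int.gcd n c := by
        rw [IsAddCyclic.card_nsmulAddMonoidHom_ker, Nat.card_zmod]; rfl

theorem isCoprime_intCast_zmod_of_gcd_eq_one {n d : ℕ} (hnd : n ∣ d) {a b : ℤ}
    (h : Int.gcd (Int.gcd d a) b = 1) : IsCoprime (a : ZMod n) (b : ZMod n) := by
  have hcast : ((Int.gcd d a : ℤ) : ZMod n) = a * (Int.gcdB d a : ZMod n) := by
    rw [Int.gcd_eq_gcd_ab]
    push_cast
    rw [(ZMod.natCast_eq_zero_iff d n).mpr hnd, zero_mul, zero_add]
  have := (Int.isCoprime_iff_gcd_eq_one.mpr h).map (Int.castRingHom (ZMod n))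
  rw [eq_intCast, eq_intCast, hcast] at this
  exact this.of_mul_left_left

-- Combining the two equations with the Bézout coefficients forces `i = -(u * r + v * s) * j`.
def solutionsEquivKerDet {R : Type*} [CommRing R] {a b u v : R} (huv : u * a + v * b = 1)
    (r s : R) :
    {ij : R × R // a * ij.1 + r * ij.2 = 0 ∧ b * ij.1 + s * ij.2 = 0} ≃
      {j : R // (a * s - b * r) * j = 0} where
  toFun x := ⟨x.1.2, by linear_combination a * x.2.2 - b * x.2.1⟩
  invFun y := ⟨(-((u * r + v * s) * y.1), y.1),
    by linear_combination (-(r * y.1)) * huv - v * y.2,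
    by linear_combination (-(s * y.1)) * huv + u * y.2⟩
  left_inv := by
    rintro ⟨⟨i, j⟩, h₁, h₂⟩
    ext
    · show -((u * r + v * s) * j) = i
      linear_combination i * huv - u * h₁ - v * h₂
    · rfl
  right_inv _ := rfl

theorem card_solutions_congruence_system_general (d e : ℕ) (hd : 0 < d)
    (a b r s : ℤ)
    (hdab : Int.gcd (Int.gcd (d : ℤ) a) b = 1) :
    Nat.card {ij : ZMod (Nat.gcd d e) × ZMod (Nat.gcd d e) //
      (a : ZMod (Nat.gcd d e)) * ij.1 + (r : ZMod (Nat.gcd d e)) * ij.2 = 0 ∧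
      (b : ZMod (Nat.gcd d e)) * ij.1 + (s : ZMod (Nat.gcd d e)) * ij.2 = 0} =
    Int.gcd (Int.gcd (d : ℤ) (e : ℤ)) (a * s - b * r) := by
  have : NeZero (Nat.gcd d e) := ⟨(Nat.gcd_pos_of_pos_left e hd).ne'⟩
  obtain ⟨u, v, huv⟩ := isCoprime_intCast_zmod_of_gcd_eq_one (Nat.gcd_dvd_left d e) hdab
  rw [Nat.card_congr (solutionsEquivKerDet huv _ _), Int.gcd_natCast_natCast,
    ← ZMod.card_intCast_mul_eq_zero]
  push_cast
  rfl

/-- The number of solutions `(i,j) ∈ (ℤ/gcd(d,e))²` of the system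
`a·i + r·j ≡ 0`, `b·i + s·j ≡ 0 (mod gcd(d,e))` equals `gcd(d, e, a·s − b·r)`,
provided `gcd(d,a,b) = gcd(e,r,s) = 1`. -/
theorem card_solutions_congruence_system (d e : ℕ) (hd : 0 < d) (he : 0 < e)
    (a b r s : ℤ)
    (hdab : Int.gcd (Int.gcd (d : ℤ) a) b = 1)
    (hers : Int.gcd (Int.gcd (e : ℤ) r) s = 1) :
    Nat.card {ij : ZMod (Nat.gcd d e) × ZMod (Nat.gcd d e) //
      (a : ZMod (Nat.gcd d e)) * ij.1 + (r : ZMod (Nat.gcd d e)) * ij.2 = 0 ∧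
      (b : ZMod (Nat.gcd d e)) * ij.1 + (s : ZMod (Nat.gcd d e)) * ij.2 = 0} =
    Int.gcd (Int.gcd (d : ℤ) (e : ℤ)) (a * s - b * r) :=
  card_solutions_congruence_system_general d e hd a b r s hdab
end

section
/- The degree of the natural projection ℂ² → X((d;a,b),(e;r,s)) (the quotient of ℂ² by the action of μ_d × μ_e with weight matrix rows (a,b) and (r,s)) equals d·e / gcd(d·gcd(e,r,s), e·gcd(d,a,b), a·s − b·r). -/
/-!
The kernel can be counted exactly: `|K| = gcd(d·gcd(e,r,s), e·gcd(d,a,b), as − br)`, the gcd of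
the `2 × 2` minors of the integer matrix with rows `(d,0), (0,e), (a,r), (b,s)`. Both sides are
unchanged when the rows `(a,r)`, `(b,s)` are swapped or when a multiple of one is added to the
other, so the Euclidean algorithm on `(a, b)` reduces to `b = 0`. Then `η^e = η^s = 1` says
`η^g = 1` with `g = gcd(e,s)`, and writing `ξ = θ^(g x)`, `η = θ^(d y)` for a primitive
`dg`-th root of unity `θ` turns `K` into `{(x,y) ∈ [0,d) × [0,g) | dg ∣ agx + rdy}`. Each `y`
admits either no or exactly `gcd(d,a)` values of `x`, and the admissible `y` are again the
solutions of a linear congruence; multiplying out gives `gcd(gcd(d,a)·g, rd)`.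
-/

open Finset

lemma card_filter_range_dvd_add {m n : ℕ} (hm : 0 < m) (hmn : m ∣ n) (w : ℤ) :
    #{x ∈ range n | (m : ℤ) ∣ ((x : ℕ) : ℤ) + w} = n / m := by
  have : NeZero m := ⟨hm.ne'⟩
  have hmod (x : ℕ) : (m : ℤ) ∣ x + w ↔ x ≡ (-(w : ZMod m)).val [MOD m] := by
    rw [← ZMod.natCast_eq_natCast_iff, ZMod.natCast_zmod_val,
      ← ZMod.intCast_zmod_eq_zero_iff_dvd, eq_neg_iff_add_eq_zero]
    push_cast
    rfl
  rw [filter_congr fun x _ => hmod x, ← Nat.count_eq_card_filter_range,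
    Nat.count_modEq_card _ hm, Nat.mod_eq_zero_of_dvd hmn]
  simp

lemma card_filter_range_dvd_mul_add_of_isCoprime {m n : ℕ} (hm : 0 < m) (hmn : m ∣ n) {c : ℤ}
    (hc : IsCoprime (m : ℤ) c) (t : ℤ) :
    #{x ∈ range n | (m : ℤ) ∣ c * ((x : ℕ) : ℤ) + t} = n / m := by
  obtain ⟨u, v, huv⟩ := hc
  have hiff (x : ℤ) : (m : ℤ) ∣ c * x + t ↔ (m : ℤ) ∣ x + v * t := by
    constructor <;> intro h
    · rw [show x + v * t = v * (c * x + t) + m * (u * x) by linear_combination -x * huv]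
      exact dvd_add (h.mul_left v) (dvd_mul_right _ _)
    · rw [show c * x + t = c * (x + v * t) + m * (u * t) by linear_combination -t * huv]
      exact dvd_add (h.mul_left c) (dvd_mul_right _ _)
  rw [filter_congr fun (x : ℕ) _ => hiff x, card_filter_range_dvd_add hm hmn]

lemma card_filter_range_dvd_mul_add {m n : ℕ} (hm : 0 < m) {c : ℤ} (hmn : (m : ℤ) ∣ c * n)
    (t : ℤ) : #{x ∈ range n | (m : ℤ) ∣ c * ((x : ℕ) : ℤ) + t} =
      if (Int.gcd m c : ℤ) ∣ t then n * Int.gcd m c / m else 0 := by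
  set g := Int.gcd m c
  have hg : 0 < g := Int.gcd_pos_of_ne_zero_left c (by positivity)
  have hcop : Int.gcd ((m : ℤ) / g) (c / g) = 1 := Int.gcd_div_gcd_div_gcd hg
  obtain ⟨m', hm'⟩ : g ∣ m := Int.natCast_dvd_natCast.mp (Int.gcd_dvd_left _ _)
  obtain ⟨c', hc'⟩ : (g : ℤ) ∣ c := Int.gcd_dvd_right _ _
  have hm'z : (m : ℤ) = g * m' := mod_cast hm'
  rw [hm'z, hc', Int.mul_ediv_cancel_left _ (by positivity),
    Int.mul_ediv_cancel_left _ (by positivity), ← Int.isCoprime_iff_gcd_eq_one] at hcop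
  have hm'pos : 0 < m' := Nat.pos_of_mul_pos_left (hm'.symm ▸ hm)
  split_ifs with ht
  · obtain ⟨t', rfl⟩ := ht
    have hiff (x : ℤ) : (m : ℤ) ∣ c * x + g * t' ↔ (m' : ℤ) ∣ c' * x + t' := by
      rw [hm'z, hc', mul_assoc, ← mul_add]
      exact mul_dvd_mul_iff_left (by positivity)
    have hm'n : m' ∣ n := by
      rw [hm'z, hc', mul_assoc] at hmn
      exact Int.natCast_dvd_natCast.mp (hcop.dvd_of_dvd_mul_left
        ((mul_dvd_mul_iff_left (by positivity)).mp hmn))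
    rw [filter_congr fun (x : ℕ) _ => hiff x,
      card_filter_range_dvd_mul_add_of_isCoprime hm'pos hm'n hcop, hm', mul_comm n,
      Nat.mul_div_mul_left _ _ hg]
  · rw [card_eq_zero, filter_eq_empty_iff]
    intro x _ hx
    exact ht ((dvd_add_right ((Int.gcd_dvd_right _ _).mul_right _)).mp
      ((Int.gcd_dvd_left _ _).trans hx))

lemma card_filter_range_prod_dvd {d e : ℕ} (hd : 0 < d) (he : 0 < e) (a r : ℤ) :
    #{q ∈ range d ×ˢ range e | (d * e : ℤ) ∣ a * e * q.1 + r * d * q.2} =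
      Nat.gcd (Int.gcd d a * e) (r * d).natAbs := by
  set A := Int.gcd d a
  have hA : 0 < A := Int.gcd_pos_of_ne_zero_left a (by positivity)
  have hAd : A ∣ d := Int.natCast_dvd_natCast.mp (Int.gcd_dvd_left _ _)
  have hfiber (y : ℕ) :
      #{x ∈ range d | ((d * e : ℕ) : ℤ) ∣ a * e * ((x : ℕ) : ℤ) + r * d * y} =
        if ((A * e : ℕ) : ℤ) ∣ r * d * y then A else 0 := by
    have hgcd : Int.gcd ((d * e : ℕ) : ℤ) (a * e) = A * e := by
      rw [Nat.cast_mul, Int.gcd_mul_right]; rfl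
    have hdvd : ((d * e : ℕ) : ℤ) ∣ a * e * d := ⟨a, by push_cast; ring⟩
    rw [card_filter_range_dvd_mul_add (by positivity) hdvd, hgcd,
      mul_left_comm, Nat.mul_div_cancel _ (by positivity)]
  have hAgcd : A ∣ Nat.gcd (A * e) (r * d).natAbs :=
    Nat.dvd_gcd (dvd_mul_right _ _) (Int.natAbs_mul r d ▸ dvd_mul_of_dvd_right hAd _)
  calc #{q ∈ range d ×ˢ range e | (d * e : ℤ) ∣ a * e * q.1 + r * d * q.2}
      = ∑ y ∈ range e,
          #{x ∈ range d | ((d * e : ℕ) : ℤ) ∣ a * e * ((x : ℕ) : ℤ) + r * d * y} := by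
        rw [card_filter, sum_product_right]
        push_cast
        simp_rw [card_filter]
    _ = #{y ∈ range e | ((A * e : ℕ) : ℤ) ∣ r * d * (y : ℕ) + 0} * A := by
        simp_rw [hfiber, card_filter, sum_mul, ite_mul, one_mul, zero_mul, add_zero]
    _ = Nat.gcd (A * e) (r * d).natAbs := by
        obtain ⟨d', hd'⟩ := hAd
        have hdvd : ((A * e : ℕ) : ℤ) ∣ r * d * e :=
          ⟨r * d', by rw [hd']; push_cast; ring⟩
        rw [card_filter_range_dvd_mul_add (by positivity) hdvd, if_pos (dvd_zero _)]
        change e * Nat.gcd (A * e) (r * d).natAbs / (A * e) * A = _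
        rw [mul_comm A e, Nat.mul_div_mul_left _ _ he, Nat.div_mul_cancel (mul_comm A e ▸ hAgcd)]

def weightGcd (d e : ℕ) (a r b s : ℤ) : ℕ :=
  Nat.gcd (d * Int.gcd (Int.gcd (e : ℤ) r) s)
    (Nat.gcd (e * Int.gcd (Int.gcd (d : ℤ) a) b) (Int.natAbs (a * s - b * r)))

lemma weightGcd_swap (d e : ℕ) (a r b s : ℤ) :
    weightGcd d e b s a r = weightGcd d e a r b s := by
  rw [weightGcd, weightGcd, Int.gcd_right_comm (e : ℤ) s, Int.gcd_right_comm (d : ℤ) b,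
    ← Int.natAbs_neg, neg_sub]

lemma Int.gcd_add_mul_of_dvd {m j : ℤ} (h : m ∣ j) (n k : ℤ) :
    Int.gcd m (n + k * j) = Int.gcd m n := by
  obtain ⟨j', rfl⟩ := h
  rw [show n + k * (m * j') = n + k * j' * m by ring, Int.gcd_add_mul_right_right]

lemma weightGcd_add_mul (d e : ℕ) (a r b s k : ℤ) :
    weightGcd d e a r (b + k * a) (s + k * r) = weightGcd d e a r b s := by
  rw [weightGcd, weightGcd, Int.gcd_add_mul_of_dvd (Int.gcd_dvd_right _ _),
    Int.gcd_add_mul_of_dvd (Int.gcd_dvd_right _ _),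
    show a * (s + k * r) - (b + k * a) * r = a * s - b * r by ring]

lemma weightGcd_zero_left (d e : ℕ) (a r s : ℤ) :
    weightGcd d e a r 0 s = Nat.gcd (Int.gcd d a * Int.gcd e s) (r * d).natAbs := by
  refine eq_of_forall_dvd' fun k => ?_
  simp only [weightGcd, Int.gcd, Int.natAbs_mul, Int.natAbs_natCast, zero_mul, sub_zero,
    Int.natAbs_zero, Nat.gcd_zero_right, ← Nat.gcd_mul_left, ← Nat.gcd_mul_right,
    Nat.dvd_gcd_iff]
  rw [mul_comm e d, mul_comm e, mul_comm r.natAbs]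
  tauto

theorem induction_on_row_ops {P : ℤ → ℤ → ℤ → ℤ → Prop}
    (swap : ∀ a r b s, P b s a r → P a r b s)
    (add_mul : ∀ a r b s k, P a r (b + k * a) (s + k * r) → P a r b s)
    (zero : ∀ a r s, P a r 0 s) (a r b s : ℤ) : P a r b s := by
  induction h : b.natAbs using Nat.strong_induction_on generalizing a r b s with
  | _ n ih =>
    rcases eq_or_ne b 0 with rfl | hb
    · exact zero a r s
    refine swap a r b s (add_mul b s a r (-(a / b)) (ih _ ?_ _ _ _ _ rfl))
    rw [show a + -(a / b) * b = a % b by rw [Int.emod_def]; ring, ← h]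
    have hlt := Int.abs_eq_natAbs b ▸ Int.emod_lt_abs a hb
    have := Int.emod_nonneg a hb
    omega

lemma pow_eq_one_and_zpow_eq_one_iff {G₀ : Type*} [GroupWithZero G₀] {x : G₀} {n : ℕ}
    (hn : n ≠ 0) (m : ℤ) : x ^ n = 1 ∧ x ^ m = 1 ↔ x ^ Int.gcd n m = 1 := by
  rcases eq_or_ne x 0 with rfl | hx
  · simp [hn]
  obtain ⟨u, rfl⟩ := hx.isUnit
  norm_cast
  rw [← zpow_natCast u n, pow_intGCD_eq_one]

section ActionKernel

variable {K : Type*} [Field K]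

variable (K) in
def actionKernel (d e : ℕ) (a r b s : ℤ) : Set (K × K) :=
  {p | p.1 ^ d = 1 ∧ p.2 ^ e = 1 ∧ p.1 ^ a * p.2 ^ r = 1 ∧ p.1 ^ b * p.2 ^ s = 1}

lemma actionKernel_swap (d e : ℕ) (a r b s : ℤ) :
    actionKernel K d e b s a r = actionKernel K d e a r b s := by
  ext p
  simp only [actionKernel, Set.mem_ofPred_eq]
  tauto

lemma actionKernel_add_mul {d e : ℕ} (hd : d ≠ 0) (he : e ≠ 0) (a r b s k : ℤ) :
    actionKernel K d e a r (b + k * a) (s + k * r) = actionKernel K d e a r b s := by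
  ext ⟨ξ, η⟩
  simp only [actionKernel, Set.mem_ofPred_eq]
  refine and_congr_right fun hξ => and_congr_right fun hη => and_congr_right fun h => ?_
  have hξ0 : ξ ≠ 0 := by rintro rfl; simp [hd] at hξ
  have hη0 : η ≠ 0 := by rintro rfl; simp [he] at hη
  rw [zpow_add₀ hξ0, zpow_add₀ hη0, mul_mul_mul_comm, mul_comm k, mul_comm k, zpow_mul,
    zpow_mul, ← mul_zpow, h, one_zpow, mul_one]

lemma actionKernel_zero_left (d : ℕ) {e : ℕ} (he : e ≠ 0) (a r s : ℤ) :
    actionKernel K d e a r 0 s = actionKernel K d (Int.gcd e s) a r 0 0 := by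
  ext ⟨ξ, η⟩
  simp only [actionKernel, Set.mem_ofPred_eq, zpow_zero, one_mul, and_true,
    ← pow_eq_one_and_zpow_eq_one_iff he s]
  tauto

lemma card_actionKernel_eq_card_filter {θ : K} {d e : ℕ} (hd : 0 < d) (he : 0 < e)
    (hθ : IsPrimitiveRoot θ (d * e)) (a r b s : ℤ) :
    Nat.card (actionKernel K d e a r b s) =
      #{q ∈ range d ×ˢ range e | (d * e : ℤ) ∣ a * e * q.1 + r * d * q.2 ∧
        (d * e : ℤ) ∣ b * e * q.1 + s * d * q.2} := by
  have : NeZero d := ⟨hd.ne'⟩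
  have : NeZero e := ⟨he.ne'⟩
  have hξ : IsPrimitiveRoot (θ ^ e) d := hθ.pow (by positivity) (mul_comm d e)
  have hη : IsPrimitiveRoot (θ ^ d) e := hθ.pow (by positivity) rfl
  have hθ0 : θ ≠ 0 := hθ.ne_zero (by positivity)
  have key (x y : ℕ) (u v : ℤ) :
      ((θ ^ e) ^ x) ^ u * ((θ ^ d) ^ y) ^ v = 1 ↔ (d * e : ℤ) ∣ u * e * x + v * d * y := by
    rw [← pow_mul, ← pow_mul, ← zpow_natCast, ← zpow_natCast θ (d * y), ← zpow_mul,
      ← zpow_mul, ← zpow_add₀ hθ0, hθ.zpow_eq_one_iff_dvd]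
    push_cast
    ring_nf
  rw [Nat.card_coe_set_eq, ← Set.ncard_coe_finset]
  refine (Set.BijOn.ncard_eq (f := fun q => ((θ ^ e) ^ q.1, (θ ^ d) ^ q.2)) ⟨?_, ?_, ?_⟩).symm
  · rintro ⟨x, y⟩ hq
    simp only [coe_filter, mem_product, mem_range, Set.mem_ofPred_eq] at hq
    exact ⟨by rw [← pow_mul, mul_comm, pow_mul, hξ.pow_eq_one, one_pow],
      by rw [← pow_mul, mul_comm, pow_mul, hη.pow_eq_one, one_pow], (key x y a r).2 hq.2.1,
      (key x y b s).2 hq.2.2⟩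
  · rintro ⟨x, y⟩ hq ⟨x', y'⟩ hq' h
    simp only [coe_filter, mem_product, mem_range, Set.mem_ofPred_eq, Prod.mk.injEq] at hq hq' h
    exact Prod.ext (hξ.pow_inj hq.1.1 hq'.1.1 h.1) (hη.pow_inj hq.1.2 hq'.1.2 h.2)
  · rintro ⟨ξ, η⟩ ⟨hξd, hηe, h₁, h₂⟩
    obtain ⟨x, hx, rfl⟩ := hξ.eq_pow_of_pow_eq_one hξd
    obtain ⟨y, hy, rfl⟩ := hη.eq_pow_of_pow_eq_one hηe
    exact ⟨(x, y), by simp [hx, hy, ← key, h₁, h₂], rfl⟩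

lemma card_actionKernel_zero_zero {θ : K} {d e : ℕ} (hd : 0 < d) (he : 0 < e)
    (hθ : IsPrimitiveRoot θ (d * e)) (a r : ℤ) :
    Nat.card (actionKernel K d e a r 0 0) = Nat.gcd (Int.gcd d a * e) (r * d).natAbs := by
  rw [card_actionKernel_eq_card_filter hd he hθ]
  simpa using card_filter_range_prod_dvd hd he a r

theorem card_actionKernel {θ : K} {d e : ℕ} (hd : 0 < d) (he : 0 < e)
    (hθ : IsPrimitiveRoot θ (d * e)) (a r b s : ℤ) :
    Nat.card (actionKernel K d e a r b s) = weightGcd d e a r b s := by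
  induction a, r, b, s using induction_on_row_ops with
  | swap a r b s h => rw [← actionKernel_swap, h, weightGcd_swap]
  | add_mul a r b s k h =>
    rw [← actionKernel_add_mul hd.ne' he.ne' a r b s k, h, weightGcd_add_mul]
  | zero a r s =>
    set g := Int.gcd e s
    have hg : 0 < g := Int.gcd_pos_of_ne_zero_left s (by positivity)
    obtain ⟨e', he'⟩ : g ∣ e := Int.natCast_dvd_natCast.mp (Int.gcd_dvd_left _ _)
    have hθ' : IsPrimitiveRoot (θ ^ e') (d * g) := hθ.pow (by positivity) (by rw [he']; ring)
    rw [actionKernel_zero_left d he.ne', card_actionKernel_zero_zero hd hg hθ',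
      weightGcd_zero_left]

end ActionKernel

/-- The degree of the natural projection `ℂ² → X((d;a,b),(e;r,s))`, i.e. the index in
`μ_d × μ_e` of the kernel `K = {(ξ,η) | ξ^a η^r = 1, ξ^b η^s = 1}` of the action, equals
`d·e / gcd(d·gcd(e,r,s), e·gcd(d,a,b), a·s − b·r)`. -/
theorem degree_projection_X_two_rows (d e : ℕ) (hd : 0 < d) (he : 0 < e)
    (a b r s : ℤ) :
    (d * e) / Nat.card {p : ℂ × ℂ // p.1 ^ d = 1 ∧ p.2 ^ e = 1 ∧
        p.1 ^ a * p.2 ^ r = 1 ∧ p.1 ^ b * p.2 ^ s = 1} =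
    (d * e) / Nat.gcd (d * Int.gcd (Int.gcd (e : ℤ) r) s)
        (Nat.gcd (e * Int.gcd (Int.gcd (d : ℤ) a) b) (Int.natAbs (a * s - b * r))) :=
  congrArg (d * e / ·)
    (card_actionKernel hd he (Complex.isPrimitiveRoot_exp _ (by positivity)) a r b s)
end

section
/- Strict transform intersection formula: in the setting of the (p,q)-weighted blow-up at a point of type (d;a,b), for ℚ-divisors C, D with (p,q)-multiplicities ν, μ at the point, the strict transforms satisfy Ĉ·D̂ = C·D − ν·μ/(d·p·q). -/
/-!
Pull the intersection `C·D` back along `π` and expand `π*C · π*D` bilinearly using the total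
transform formulas. The two mixed terms `(μ/e) Ĉ·E` and `(ν/e) E·D̂` each contribute `νμ/(dpq)`
and the exceptional term `(νμ/e²) E²` contributes `−νμ/(dpq)`, so `C·D = Ĉ·D̂ + νμ/(dpq)`.
-/

namespace LinearMap

variable {R M : Type*} [CommRing R] [AddCommGroup M] [Module R M]

theorem add_smul_add_smul_apply (B : M →ₗ[R] M →ₗ[R] R) (x y E : M) (s t : R) :
    B (x + s • E) (y + t • E) = B x y + t * B x E + s * B E y + s * t * B E E := by
  simp only [map_add, map_smul, add_apply, smul_apply, smul_eq_mul]
  ring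

end LinearMap

/-- Abstract form of the strict transform formula: `e` is the multiplicity scale and `k` stands
for `dpq` (the identity holds even for `k = 0`, as every term divided by `k` then vanishes). -/
theorem apply_add_div_smul_add_div_smul {K M : Type*} [Field K] [AddCommGroup M] [Module K M]
    (B : M →ₗ[K] M →ₗ[K] K) {x y E : M} {e k ν μ : K} (he : e ≠ 0)
    (hEE : B E E = -e ^ 2 / k) (hxE : B x E = e * ν / k) (hEy : B E y = e * μ / k) :
    B (x + (ν / e) • E) (y + (μ / e) • E) = B x y + ν * μ / k := by
  rw [LinearMap.add_smul_add_smul_apply, hEE, hxE, hEy]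
  field_simp
  ring

theorem strict_transform_intersection_weighted_blowup_general
    (d p q : ℕ) (a b : ℤ) (hd : 0 < d)
    (e : ℕ) (he : e = Int.gcd (d : ℤ) ((p : ℤ) * b - (q : ℤ) * a))
    (ν μ : ℚ)
    (VX VXh : Type*) [AddCommGroup VX] [Module ℚ VX] [AddCommGroup VXh] [Module ℚ VXh]
    (B : VX →ₗ[ℚ] VX →ₗ[ℚ] ℚ) (Bh : VXh →ₗ[ℚ] VXh →ₗ[ℚ] ℚ)
    (hBsymm : ∀ x y : VXh, Bh x y = Bh y x)
    (π : VX →ₗ[ℚ] VXh)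
    (hπ : ∀ D₁ D₂ : VX, Bh (π D₁) (π D₂) = B D₁ D₂)
    (C D : VX) (Chat Dhat E : VXh)
    (hC : π C = Chat + (ν / (e : ℚ)) • E)
    (hD : π D = Dhat + (μ / (e : ℚ)) • E)
    (hE2 : Bh E E = -(e : ℚ) ^ 2 / (d * p * q : ℚ))
    (hEC : Bh E Chat = (e : ℚ) * ν / (d * p * q : ℚ))
    (hED : Bh E Dhat = (e : ℚ) * μ / (d * p * q : ℚ)) :
    Bh Chat Dhat = B C D - ν * μ / (d * p * q : ℚ) := by
  have he0 : (e : ℚ) ≠ 0 := by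
    rw [he, Nat.cast_ne_zero]
    exact (Int.gcd_pos_of_ne_zero_left _ (by exact_mod_cast hd.ne')).ne'
  rw [← hπ, hC, hD,
    apply_add_div_smul_add_div_smul Bh he0 hE2 ((hBsymm Chat E).trans hEC) hED]
  ring

/-- Strict transform intersection formula for the `(p,q)`-weighted blow-up `π` at a point
of normalized type `(d;a,b)`: if `C, D` have `(p,q)`-multiplicities `ν, μ` at the point,
then `Ĉ·D̂ = C·D − ν·μ/(dpq)`.  The setting is encoded via the total transform formulas
`π*(C) = Ĉ + (ν/e)E`, `π*(D) = D̂ + (μ/e)E`, `E² = −e²/(dpq)`, `E·Ĉ = eν/(dpq)`,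
`E·D̂ = eμ/(dpq)`, and the fact that `π*` preserves intersection numbers. -/
theorem strict_transform_intersection_weighted_blowup
    (d p q : ℕ) (a b : ℤ) (hd : 0 < d) (hp : 0 < p) (hq : 0 < q)
    (hpq : Nat.Coprime p q)
    (ha : Int.gcd (d : ℤ) a = 1) (hb : Int.gcd (d : ℤ) b = 1)
    (e : ℕ) (he : e = Int.gcd (d : ℤ) ((p : ℤ) * b - (q : ℤ) * a))
    (ν μ : ℚ)
    (VX VXh : Type*) [AddCommGroup VX] [Module ℚ VX] [AddCommGroup VXh] [Module ℚ VXh]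
    (B : VX →ₗ[ℚ] VX →ₗ[ℚ] ℚ) (Bh : VXh →ₗ[ℚ] VXh →ₗ[ℚ] ℚ)
    (hBsymm : ∀ x y : VXh, Bh x y = Bh y x)
    (π : VX →ₗ[ℚ] VXh)
    (hπ : ∀ D₁ D₂ : VX, Bh (π D₁) (π D₂) = B D₁ D₂)
    (C D : VX) (Chat Dhat E : VXh)
    (hC : π C = Chat + (ν / (e : ℚ)) • E)
    (hD : π D = Dhat + (μ / (e : ℚ)) • E)
    (hE2 : Bh E E = -(e : ℚ) ^ 2 / (d * p * q : ℚ))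
    (hEC : Bh E Chat = (e : ℚ) * ν / (d * p * q : ℚ))
    (hED : Bh E Dhat = (e : ℚ) * μ / (d * p * q : ℚ)) :
    Bh Chat Dhat = B C D - ν * μ / (d * p * q : ℚ) :=
  strict_transform_intersection_weighted_blowup_general d p q a b hd e he ν μ VX VXh B Bh hBsymm π
    hπ C D Chat Dhat E hC hD hE2 hEC hED
end
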